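/- Let L_n = 3 + Binomial(n-1,p) and Z_n = L_n^2 - 3L_n + 4(n+2). Then Var(Z_n) = (-4p^4 + 4p^3) n^3 + (22p^4 - 40p^3 + 18p^2) n^2 + (-38p^4 + 92p^3 - 70p^2 + 16p) n + 20p^4 - 56p^3 + 52p^2 - 16p. -/
import Mathlib


open Filter MeasureTheory Asymptotics Topology

/-- Expectation of `f` under a Binomial(m, p) distribution, as a finite sum. -/
noncomputable def binExp (m : ℕ) (p : ℝ) (f : ℕ → ℝ) : ℝ :=
  ∑ k ∈ Finset.range (m+1), (m.choose k : ℝ) * p^k * (1-p)^(m-k) * f k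

/-- Variance of `f` under a Binomial(m, p) distribution. -/
noncomputable def binVar (m : ℕ) (p : ℝ) (f : ℕ → ℝ) : ℝ :=
  binExp m p (fun k => (f k - binExp m p f)^2)

lemma binExp_congr (m : ℕ) (p : ℝ) (f g : ℕ → ℝ) (h : ∀ k, f k = g k) :
    binExp m p f = binExp m p g := by
  unfold binExp; exact Finset.sum_congr rfl (fun k _ => by rw [h])

lemma binExp_add (m : ℕ) (p : ℝ) (f g : ℕ → ℝ) :
    binExp m p (fun k => f k + g k) = binExp m p f + binExp m p g := by
  unfold binExp
  rw [← Finset.sum_add_distrib]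
  exact Finset.sum_congr rfl (fun k _ => by ring)

lemma binExp_const_mul (m : ℕ) (p : ℝ) (c : ℝ) (f : ℕ → ℝ) :
    binExp m p (fun k => c * f k) = c * binExp m p f := by
  unfold binExp
  rw [Finset.mul_sum]
  exact Finset.sum_congr rfl (fun k _ => by ring)

lemma binExp_one (m : ℕ) (p : ℝ) : binExp m p (fun _ => (1:ℝ)) = 1 := by
  unfold binExp
  have := add_pow p (1-p) m
  simp only [mul_one]
  calc ∑ k ∈ Finset.range (m+1), (m.choose k : ℝ) * p^k * (1-p)^(m-k)
      = ∑ k ∈ Finset.range (m+1), p^k * (1-p)^(m-k) * (m.choose k : ℝ) := by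
        exact Finset.sum_congr rfl (fun k _ => by ring)
    _ = (p + (1-p))^m := (add_pow p (1-p) m).symm
    _ = 1 := by norm_num

lemma binExp_succ (m : ℕ) (p : ℝ) (f : ℕ → ℝ) :
    binExp (m+1) p f = p * binExp m p (fun k => f (k+1)) + (1-p) * binExp m p f := by
  unfold binExp
  rw [Finset.sum_range_succ' (fun k => ((m+1).choose k : ℝ) * p^k * (1-p)^(m+1-k) * f k) (m+1)]
  have h1 : ∀ k ∈ Finset.range (m+1),
      (((m+1).choose (k+1) : ℝ)) * p^(k+1) * (1-p)^(m+1-(k+1)) * f (k+1)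
        = (m.choose k : ℝ) * p^(k+1) * (1-p)^(m-k) * f (k+1)
          + (m.choose (k+1) : ℝ) * p^(k+1) * (1-p)^(m-k) * f (k+1) := by
    intro k hk
    rw [Nat.choose_succ_succ]
    push_cast [Nat.succ_eq_add_one, Nat.succ_sub_succ]
    ring
  rw [Finset.sum_congr rfl h1, Finset.sum_add_distrib]
  have h2 : ∑ k ∈ Finset.range (m+1), (m.choose k : ℝ) * p^(k+1) * (1-p)^(m-k) * f (k+1)
      = p * ∑ k ∈ Finset.range (m+1), (m.choose k : ℝ) * p^k * (1-p)^(m-k) * f (k+1) := by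
    rw [Finset.mul_sum]; exact Finset.sum_congr rfl (fun k _ => by ring)
  have h3 : (1-p) * ∑ k ∈ Finset.range (m+1), (m.choose k : ℝ) * p^k * (1-p)^(m-k) * f k
      = ∑ k ∈ Finset.range m, (m.choose (k+1) : ℝ) * p^(k+1) * (1-p)^(m-k) * f (k+1)
        + ((m.choose 0 : ℝ)) * p^0 * (1-p)^(m+1) * f 0 := by
    rw [Finset.mul_sum, Finset.sum_range_succ'
      (fun k => (1-p) * ((m.choose k : ℝ) * p^k * (1-p)^(m-k) * f k)) m]
    congr 1
    · exact Finset.sum_congr rfl (fun k hk => by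
        have hk' : k < m := Finset.mem_range.mp hk
        have : m - k = (m - (k+1)) + 1 := by omega
        rw [this]; ring)
    · simp; ring
  have h4 : ∑ k ∈ Finset.range (m+1), (m.choose (k+1) : ℝ) * p^(k+1) * (1-p)^(m-k) * f (k+1)
      = ∑ k ∈ Finset.range m, (m.choose (k+1) : ℝ) * p^(k+1) * (1-p)^(m-k) * f (k+1) := by
    rw [Finset.sum_range_succ]
    simp [Nat.choose_succ_self]
  rw [h4, h2, h3]
  simp [Nat.choose_zero_right]
  ring

lemma binExp_poly4 (m : ℕ) (p a0 a1 a2 a3 a4 : ℝ) :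
    binExp m p (fun k => a4*(k:ℝ)^4 + (a3*(k:ℝ)^3 + (a2*(k:ℝ)^2 + (a1*(k:ℝ) + a0*1)))) =
      a4 * binExp m p (fun k => (k:ℝ)^4) + a3 * binExp m p (fun k => (k:ℝ)^3)
        + a2 * binExp m p (fun k => (k:ℝ)^2) + a1 * binExp m p (fun k => (k:ℝ))
        + a0 * binExp m p (fun _ => (1:ℝ)) := by
  simp only [binExp, Finset.mul_sum, ← Finset.sum_add_distrib]
  exact Finset.sum_congr rfl (fun k _ => by ring)

lemma moments (p : ℝ) (m : ℕ) :
    binExp m p (fun k => (k:ℝ)) = m*p ∧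
    binExp m p (fun k => (k:ℝ)^2) = m*p + m*(m-1)*p^2 ∧
    binExp m p (fun k => (k:ℝ)^3) = m*p + 3*m*(m-1)*p^2 + m*(m-1)*(m-2)*p^3 ∧
    binExp m p (fun k => (k:ℝ)^4) = m*p + 7*m*(m-1)*p^2 + 6*m*(m-1)*(m-2)*p^3
      + m*(m-1)*(m-2)*(m-3)*p^4 := by
  induction m with
  | zero => unfold binExp; norm_num
  | succ m ih =>
    obtain ⟨h1, h2, h3, h4⟩ := ih
    have e1 : binExp m p (fun k => ((k+1:ℕ):ℝ)) = binExp m p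
        (fun k => 0*(k:ℝ)^4 + (0*(k:ℝ)^3 + (0*(k:ℝ)^2 + (1*(k:ℝ) + 1*1)))) :=
      binExp_congr _ _ _ _ (fun k => by push_cast; ring)
    have e2 : binExp m p (fun k => ((k+1:ℕ):ℝ)^2) = binExp m p
        (fun k => 0*(k:ℝ)^4 + (0*(k:ℝ)^3 + (1*(k:ℝ)^2 + (2*(k:ℝ) + 1*1)))) :=
      binExp_congr _ _ _ _ (fun k => by push_cast; ring)
    have e3 : binExp m p (fun k => ((k+1:ℕ):ℝ)^3) = binExp m p
        (fun k => 0*(k:ℝ)^4 + (1*(k:ℝ)^3 + (3*(k:ℝ)^2 + (3*(k:ℝ) + 1*1)))) :=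
      binExp_congr _ _ _ _ (fun k => by push_cast; ring)
    have e4 : binExp m p (fun k => ((k+1:ℕ):ℝ)^4) = binExp m p
        (fun k => 1*(k:ℝ)^4 + (4*(k:ℝ)^3 + (6*(k:ℝ)^2 + (4*(k:ℝ) + 1*1)))) :=
      binExp_congr _ _ _ _ (fun k => by push_cast; ring)
    refine ⟨?_, ?_, ?_, ?_⟩ <;>
      simp only [binExp_succ, e1, e2, e3, e4, binExp_poly4, binExp_one, h1, h2, h3, h4] <;>
      push_cast <;> ring


/-- Var(Z_n) for the Zagreb index Z_n = L_n^2 - 3L_n + 4(n+2). -/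
theorem stmt11 (n : ℕ) (hn : 1 ≤ n) (p : ℝ) (hp0 : 0 < p) (hp1 : p < 1) :
    binVar (n-1) p (fun k => (((k : ℝ) + 3) ^ 2 - 3 * ((k : ℝ) + 3) + 4 * ((n : ℝ) + 2))) =
      (-4*p^4 + 4*p^3) * (n : ℝ)^3 + (22*p^4 - 40*p^3 + 18*p^2) * (n : ℝ)^2
        + (-38*p^4 + 92*p^3 - 70*p^2 + 16*p) * (n : ℝ) + 20*p^4 - 56*p^3 + 52*p^2 - 16*p := by
  set m := n - 1 with hm
  have hmc : ((m:ℕ):ℝ) = (n:ℝ) - 1 := by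
    rw [hm, Nat.cast_sub hn]; norm_num
  obtain ⟨h1, h2, h3, h4⟩ := moments p m
  set f : ℕ → ℝ := fun k => (((k : ℝ) + 3) ^ 2 - 3 * ((k : ℝ) + 3) + 4 * ((n : ℝ) + 2)) with hf
  have hmu : binExp m p f = (m:ℝ)*p + (m:ℝ)*((m:ℝ)-1)*p^2 + 3*((m:ℝ)*p) + (4*((n:ℝ)+2)) := by
    have : binExp m p f = binExp m p
        (fun k => 0*(k:ℝ)^4 + (0*(k:ℝ)^3 + (1*(k:ℝ)^2 + (3*(k:ℝ) + (4*((n:ℝ)+2))*1)))) :=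
      binExp_congr _ _ _ _ (fun k => by simp only [hf]; ring)
    rw [this, binExp_poly4, binExp_one, h1, h2]; ring
  set μ := binExp m p f with hμ
  set C : ℝ := 4*((n:ℝ)+2) - μ with hC
  have hv : binVar m p f = binExp m p
      (fun k => 1*(k:ℝ)^4 + (6*(k:ℝ)^3 + ((9+2*C)*(k:ℝ)^2 + (6*C*(k:ℝ) + (C^2)*1)))) := by
    unfold binVar
    exact binExp_congr _ _ _ _ (fun k => by simp only [hf, hC, ← hμ]; ring)
  rw [hv, binExp_poly4, binExp_one, h1, h2, h3, h4, hC, hmu, hmc]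
  ring
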